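/- Let 𝒞_ε ⊂ ℝⁿ be a truncated cone as above with d·x̂ ≥ δ > 0 on the cap 𝒦, let p > 1 with Hölder conjugate p', and let α + β ∈ ℝ with n + p'(α+β) > 0. Then for any r ∈ L^p(𝒞_ε) and τ large: |∫_{𝒞_ε} r(x) e^{-τ d·x} |x|^{α+β} dx| ≤ C ‖r‖_{L^p(𝒞_ε)} · τ^{-(n/p' + α + β)} = C ‖r‖_{L^p(𝒞_ε)} · τ^{-(n + α + β - n/p)}, with C independent of τ and r. -/

import Mathlib

open MeasureTheory Measure Set Metric
open scoped ENNReal NNReal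

lemma polar_lintegral {n : ℕ} (hn : 1 ≤ n) (f : ℝ → ℝ≥0∞) (hf : Measurable f) :
    ∫⁻ x : EuclideanSpace ℝ (Fin n), f ‖x‖ =
      (n : ℝ≥0∞) * volume (ball (0 : EuclideanSpace ℝ (Fin n)) 1) *
        ∫⁻ y in Ioi (0:ℝ), ENNReal.ofReal (y ^ (n - 1)) * f y := by
  haveI : Nontrivial (EuclideanSpace ℝ (Fin n)) := by
    apply Module.nontrivial_of_finrank_pos (R := ℝ) (M := EuclideanSpace ℝ (Fin n))
    rw [finrank_euclideanSpace_fin]; omega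
  have hdim : Module.finrank ℝ (EuclideanSpace ℝ (Fin n)) = n := finrank_euclideanSpace_fin
  have hmeas2 : Measurable (fun ω : (sphere (0 : EuclideanSpace ℝ (Fin n)) 1) × Ioi (0:ℝ) =>
      f ω.2) := hf.comp (measurable_subtype_coe.comp measurable_snd)
  calc ∫⁻ x : EuclideanSpace ℝ (Fin n), f ‖x‖
      = ∫⁻ x in ({0}ᶜ : Set (EuclideanSpace ℝ (Fin n))), f ‖x‖ := by
        rw [MeasureTheory.restrict_compl_singleton]
    _ = ∫⁻ x : ({0}ᶜ : Set (EuclideanSpace ℝ (Fin n))), f ‖(x : EuclideanSpace ℝ (Fin n))‖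
          ∂((volume : Measure (EuclideanSpace ℝ (Fin n))).comap Subtype.val) :=
        (lintegral_subtype_comap (measurableSet_singleton 0).compl _).symm
    _ = ∫⁻ ω : (sphere (0 : EuclideanSpace ℝ (Fin n)) 1) × Ioi (0:ℝ), f ω.2
          ∂(((volume : Measure (EuclideanSpace ℝ (Fin n))).toSphere).prod
            (Measure.volumeIoiPow (Module.finrank ℝ (EuclideanSpace ℝ (Fin n)) - 1))) := by
        rw [← (Measure.measurePreserving_homeomorphUnitSphereProd
            (volume : Measure (EuclideanSpace ℝ (Fin n)))).lintegral_comp_emb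
          (Homeomorph.measurableEmbedding _) (fun ω => f ω.2)]
        simp
    _ = (volume : Measure (EuclideanSpace ℝ (Fin n))).toSphere univ *
          ∫⁻ y : Ioi (0:ℝ), f y ∂(Measure.volumeIoiPow
            (Module.finrank ℝ (EuclideanSpace ℝ (Fin n)) - 1)) := by
        rw [MeasureTheory.lintegral_prod _ hmeas2.aemeasurable]
        simp [lintegral_const, mul_comm]
    _ = (n : ℝ≥0∞) * volume (ball (0 : EuclideanSpace ℝ (Fin n)) 1) *
          ∫⁻ y in Ioi (0:ℝ), ENNReal.ofReal (y ^ (n - 1)) * f y := by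
        have hfs : Measurable (fun y : Ioi (0:ℝ) => f y) := hf.comp measurable_subtype_coe
        rw [Measure.toSphere_apply_univ, hdim, Measure.volumeIoiPow,
          lintegral_withDensity_eq_lintegral_mul _
            ((measurable_subtype_coe.pow_const _).ennreal_ofReal) hfs,
          ← lintegral_subtype_comap measurableSet_Ioi
            (fun y : ℝ => ENNReal.ofReal (y ^ (n - 1)) * f y)]
        rfl

lemma key_lintegral {n : ℕ} (hn : 1 ≤ n) {s b : ℝ} (hb : 0 < b) (hs : 0 < (n:ℝ) + s) :
    ∫⁻ x : EuclideanSpace ℝ (Fin n), ENNReal.ofReal (Real.exp (-(b * ‖x‖)) * ‖x‖ ^ s) =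
      ENNReal.ofReal (((n : ℝ) * (volume (ball (0 : EuclideanSpace ℝ (Fin n)) 1)).toReal) *
        ((1/b) ^ ((n:ℝ) + s) * Real.Gamma ((n:ℝ) + s))) := by
  have hfmeas : Measurable (fun y : ℝ => ENNReal.ofReal (Real.exp (-(b * y)) * y ^ s)) := by
    apply Measurable.ennreal_ofReal
    exact (Real.measurable_exp.comp ((measurable_const.mul measurable_id).neg)).mul
      (measurable_id.pow_const s)
  rw [polar_lintegral hn _ hfmeas]
  have h1d : ∫⁻ y in Ioi (0:ℝ), ENNReal.ofReal (y ^ (n - 1)) *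
      ENNReal.ofReal (Real.exp (-(b * y)) * y ^ s)
      = ENNReal.ofReal ((1/b) ^ ((n:ℝ) + s) * Real.Gamma ((n:ℝ) + s)) := by
    have hcong : ∀ y ∈ Ioi (0:ℝ), ENNReal.ofReal (y ^ (n - 1)) *
        ENNReal.ofReal (Real.exp (-(b * y)) * y ^ s)
        = ENNReal.ofReal (y ^ ((n:ℝ) + s - 1) * Real.exp (-(b * y))) := by
      intro y hy
      rw [mem_Ioi] at hy
      rw [← ENNReal.ofReal_mul (by positivity)]
      congr 1
      have h1 : (y : ℝ) ^ (n - 1 : ℕ) = y ^ ((n : ℝ) - 1) := by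
        rw [← Real.rpow_natCast y (n-1), Nat.cast_sub hn, Nat.cast_one]
      rw [h1]
      rw [show (n:ℝ) + s - 1 = ((n:ℝ) - 1) + s by ring, Real.rpow_add hy]
      ring
    rw [setLIntegral_congr_fun measurableSet_Ioi hcong]
    have hint : IntegrableOn (fun y : ℝ => y ^ ((n:ℝ) + s - 1) * Real.exp (-(b * y)))
        (Ioi (0:ℝ)) := by
      have := integrableOn_rpow_mul_exp_neg_mul_rpow
        (s := (n:ℝ) + s - 1) (p := 1) (b := b) (by linarith) one_pos hb
      simpa [Real.rpow_one, neg_mul] using this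
    rw [← MeasureTheory.ofReal_integral_eq_lintegral_ofReal hint]
    · rw [Real.integral_rpow_mul_exp_neg_mul_Ioi hs hb]
    · filter_upwards [ae_restrict_mem measurableSet_Ioi] with y hy
      have : (0:ℝ) < y := hy
      positivity
  rw [h1d, ← ENNReal.ofReal_natCast n,
    ← ENNReal.ofReal_toReal (measure_ball_lt_top (x := (0 : EuclideanSpace ℝ (Fin n))) (r := 1)).ne,
    ← ENNReal.ofReal_mul (by positivity), ← ENNReal.ofReal_mul (by positivity),
    ENNReal.toReal_ofReal ENNReal.toReal_nonneg]

/-- Hölder-type estimate for the CGO residual terms: with the truncated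
cone `𝒞_ε` over a cap `𝒦` with `d·x̂ ≥ δ > 0`, `p > 1` with conjugate `p' = p/(p-1)`,
and `n + p'(α+β) > 0`, there are `C` and `T` (independent of `τ` and `r`) such that for all
`τ ≥ T` and all `r ∈ L^p(𝒞_ε)`:
`|∫_{𝒞_ε} r e^{-τ d·x} |x|^{α+β} dx| ≤ C ‖r‖_{L^p} τ^{-(n+α+β-n/p)}`. -/
theorem cone_holder_estimate (n : ℕ) (hn : 1 ≤ n)
    (𝒦 : Set (EuclideanSpace ℝ (Fin n)))
    (h𝒦 : 𝒦 ⊆ Metric.sphere (0 : EuclideanSpace ℝ (Fin n)) 1)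
    (d : EuclideanSpace ℝ (Fin n)) (hd : ‖d‖ = 1)
    (δ ε : ℝ) (hδ : 0 < δ) (hε : 0 < ε)
    (hdK : ∀ y ∈ 𝒦, δ ≤ (inner ℝ d y : ℝ))
    (p : ℝ) (hp : 1 < p)
    (α β : ℝ) (hαβ : 0 < (n : ℝ) + (p / (p - 1)) * (α + β)) :
    ∃ C T : ℝ, 0 < C ∧ 0 < T ∧ ∀ τ : ℝ, T ≤ τ →
      ∀ r : EuclideanSpace ℝ (Fin n) → ℝ,
        MemLp r (ENNReal.ofReal p)
          (volume.restrict {x : EuclideanSpace ℝ (Fin n) |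
            0 < ‖x‖ ∧ ‖x‖ < ε ∧ ‖x‖⁻¹ • x ∈ 𝒦}) →
        |∫ x in {x : EuclideanSpace ℝ (Fin n) |
            0 < ‖x‖ ∧ ‖x‖ < ε ∧ ‖x‖⁻¹ • x ∈ 𝒦},
          r x * Real.exp (-(τ * (inner ℝ d x : ℝ))) * ‖x‖ ^ (α + β)|
        ≤ C * (eLpNorm r (ENNReal.ofReal p)
            (volume.restrict {x : EuclideanSpace ℝ (Fin n) |
              0 < ‖x‖ ∧ ‖x‖ < ε ∧ ‖x‖⁻¹ • x ∈ 𝒦})).toReal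
          * τ ^ (-((n : ℝ) + α + β - n / p)) := by
  have hp0 : (0:ℝ) < p := lt_trans one_pos hp
  have hp1 : p - 1 ≠ 0 := by linarith
  set q : ℝ := p / (p - 1) with hqdef
  have hpq : p.HolderConjugate q := Real.HolderConjugate.conjExponent hp
  have hq1 : 1 < q := hpq.symm.lt
  have hq0 : (0:ℝ) < q := lt_trans one_pos hq1
  set s : ℝ := (α + β) * q with hsdef
  have hns : 0 < (n:ℝ) + s := by
    have : q * (α + β) = s := by rw [hsdef]; ring
    linarith [hαβ, this.ge, this.le]
  set S := {x : EuclideanSpace ℝ (Fin n) | 0 < ‖x‖ ∧ ‖x‖ < ε ∧ ‖x‖⁻¹ • x ∈ 𝒦} with hSdef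
  set V : ℝ := (volume (ball (0 : EuclideanSpace ℝ (Fin n)) 1)).toReal with hVdef
  have hV : 0 < V := ENNReal.toReal_pos (measure_ball_pos _ _ one_pos).ne' measure_ball_lt_top.ne
  have hΓ : 0 < Real.Gamma ((n:ℝ) + s) := Real.Gamma_pos_of_pos hns
  have hn0 : (0:ℝ) < n := by exact_mod_cast hn
  set K' : ℝ := ((n:ℝ) * V) * ((1/(q*δ)) ^ ((n:ℝ) + s) * Real.Gamma ((n:ℝ) + s)) with hK'def
  have hK' : 0 < K' := by
    apply mul_pos (mul_pos hn0 hV)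
    apply mul_pos _ hΓ
    positivity
  refine ⟨K' ^ (1/q), 1, by positivity, one_pos, ?_⟩
  intro τ hτ r hr
  have hτ0 : (0:ℝ) < τ := lt_of_lt_of_le one_pos hτ
  set ν := volume.restrict S with hνdef
  set g : EuclideanSpace ℝ (Fin n) → ℝ :=
    fun x => Real.exp (-(τ * (inner ℝ d x : ℝ))) * ‖x‖ ^ (α + β) with hgdef
  have hinner : Measurable (fun x : EuclideanSpace ℝ (Fin n) => (inner ℝ d x : ℝ)) :=
    (continuous_const.inner continuous_id).measurable
  have hg_meas : Measurable g := by
    apply Measurable.mul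
    · exact Real.measurable_exp.comp ((measurable_const.mul hinner).neg)
    · exact measurable_norm.pow_const (α + β)
  -- Step A
  have hA : |∫ x in S, r x * Real.exp (-(τ * (inner ℝ d x : ℝ))) * ‖x‖ ^ (α + β)|
      ≤ (∫⁻ x, (‖r x‖₊ : ℝ≥0∞) * (‖g x‖₊ : ℝ≥0∞) ∂ν).toReal := by
    have h0 := norm_integral_le_lintegral_norm (μ := ν)
      (f := fun x => r x * Real.exp (-(τ * (inner ℝ d x : ℝ))) * ‖x‖ ^ (α + β))
    rw [Real.norm_eq_abs] at h0
    refine h0.trans_eq ?_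
    congr 1
    apply lintegral_congr
    intro x
    rw [← enorm_eq_nnnorm, ← enorm_eq_nnnorm]
    simp only [← ofReal_norm]
    rw [← ENNReal.ofReal_mul (norm_nonneg _), ← norm_mul, mul_assoc]
  -- Step B : Hölder
  have hB := ENNReal.lintegral_mul_le_Lp_mul_Lq ν hpq hr.1.nnnorm.aemeasurable.coe_nnreal_ennreal
    (hg_meas.nnnorm.coe_nnreal_ennreal.aemeasurable)
  simp only [Pi.mul_apply] at hB
  have hM : (∫⁻ x, (‖r x‖₊ : ℝ≥0∞) ^ p ∂ν) ^ (1/p) = eLpNorm r (ENNReal.ofReal p) ν := by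
    rw [eLpNorm_eq_lintegral_rpow_enorm_toReal (ENNReal.ofReal_pos.mpr hp0).ne' ENNReal.ofReal_ne_top,
      ENNReal.toReal_ofReal hp0.le]
    simp only [enorm_eq_nnnorm]
  -- Step C : bound the q-norm of g
  have hgq : ∀ x, (‖g x‖₊ : ℝ≥0∞) ^ q
      = ENNReal.ofReal (Real.exp (-(τ * (inner ℝ d x : ℝ)) * q) * ‖x‖ ^ s) := by
    intro x
    rw [← enorm_eq_nnnorm, ← ofReal_norm, ENNReal.ofReal_rpow_of_nonneg (norm_nonneg _) hq0.le]
    congr 1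
    rw [hgdef]
    rw [Real.norm_of_nonneg (by positivity),
      Real.mul_rpow (Real.exp_pos _).le (by positivity), ← Real.exp_mul,
      ← Real.rpow_mul (norm_nonneg _)]
  set B := {x : EuclideanSpace ℝ (Fin n) | δ * ‖x‖ ≤ (inner ℝ d x : ℝ)} with hBdef
  have hBmeas : MeasurableSet B :=
    measurableSet_le (measurable_const.mul measurable_norm) hinner
  have hSB : S ⊆ B := by
    rintro x ⟨hx0, -, hxK⟩
    have h1 : δ ≤ (inner ℝ d (‖x‖⁻¹ • x) : ℝ) := hdK _ hxK
    have h2 : (inner ℝ d (‖x‖⁻¹ • x) : ℝ) = ‖x‖⁻¹ * (inner ℝ d x : ℝ) :=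
      real_inner_smul_right d x ‖x‖⁻¹
    have h3 : δ * ‖x‖ ≤ (‖x‖⁻¹ * (inner ℝ d x : ℝ)) * ‖x‖ := by
      apply mul_le_mul_of_nonneg_right _ hx0.le
      rw [← h2]; exact h1
    have h4 : (‖x‖⁻¹ * (inner ℝ d x : ℝ)) * ‖x‖ = (inner ℝ d x : ℝ) := by
      field_simp
    exact le_of_le_of_eq h3 h4
  have hN : (∫⁻ x, (‖g x‖₊ : ℝ≥0∞) ^ q ∂ν) ≤ ENNReal.ofReal (K' * τ ^ (-((n:ℝ) + s))) := by
    have hA_eq : ((n : ℝ) * V) * ((1/((q*δ)*τ)) ^ ((n:ℝ) + s) * Real.Gamma ((n:ℝ) + s))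
        = K' * τ ^ (-((n:ℝ) + s)) := by
      have h1τ : ((1:ℝ)/((q*δ)*τ)) ^ ((n:ℝ)+s)
          = (1/(q*δ)) ^ ((n:ℝ)+s) * τ ^ (-((n:ℝ)+s)) := by
        rw [show (1:ℝ)/((q*δ)*τ) = (1/(q*δ)) * τ⁻¹ by rw [one_div, mul_inv, one_div],
          Real.mul_rpow (by positivity) (by positivity), Real.inv_rpow hτ0.le,
          ← Real.rpow_neg hτ0.le]
      rw [h1τ, hK'def]; ring
    calc ∫⁻ x, (‖g x‖₊ : ℝ≥0∞) ^ q ∂ν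
        = ∫⁻ x in S, ENNReal.ofReal (Real.exp (-(τ * (inner ℝ d x : ℝ)) * q) * ‖x‖ ^ s) ∂volume :=
          lintegral_congr fun x => hgq x
      _ ≤ ∫⁻ x in B, ENNReal.ofReal (Real.exp (-(τ * (inner ℝ d x : ℝ)) * q) * ‖x‖ ^ s) ∂volume :=
          lintegral_mono_set hSB
      _ ≤ ∫⁻ x in B, ENNReal.ofReal (Real.exp (-(((q*δ)*τ) * ‖x‖)) * ‖x‖ ^ s) ∂volume := by
          apply setLIntegral_mono
          · apply Measurable.ennreal_ofReal
            exact (Real.measurable_exp.comp ((measurable_const.mul measurable_norm).neg)).mul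
              (measurable_norm.pow_const s)
          · intro x hx
            apply ENNReal.ofReal_le_ofReal
            apply mul_le_mul_of_nonneg_right _ (by positivity)
            apply Real.exp_le_exp.mpr
            have hx' : δ * ‖x‖ ≤ (inner ℝ d x : ℝ) := hx
            have h5 := mul_le_mul_of_nonneg_left hx' (le_of_lt (mul_pos hτ0 hq0))
            nlinarith [h5]
      _ ≤ ∫⁻ x, ENNReal.ofReal (Real.exp (-(((q*δ)*τ) * ‖x‖)) * ‖x‖ ^ s) ∂volume :=
          setLIntegral_le_lintegral _ _
      _ = ENNReal.ofReal (((n : ℝ) * V) * ((1/((q*δ)*τ)) ^ ((n:ℝ) + s)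
            * Real.Gamma ((n:ℝ) + s))) := key_lintegral hn (by positivity) hns
      _ = ENNReal.ofReal (K' * τ ^ (-((n:ℝ) + s))) := by rw [hA_eq]
  -- Combine
  have hKτ : (0:ℝ) ≤ K' * τ ^ (-((n:ℝ) + s)) := by positivity
  have hfinal : |∫ x in S, r x * Real.exp (-(τ * (inner ℝ d x : ℝ))) * ‖x‖ ^ (α + β)|
      ≤ (eLpNorm r (ENNReal.ofReal p) ν).toReal * (K' * τ ^ (-((n:ℝ) + s))) ^ (1/q) := by
    apply hA.trans
    have hle : (∫⁻ x, (‖r x‖₊ : ℝ≥0∞) * (‖g x‖₊ : ℝ≥0∞) ∂ν)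
        ≤ eLpNorm r (ENNReal.ofReal p) ν * ENNReal.ofReal (K' * τ ^ (-((n:ℝ) + s))) ^ (1/q) := by
      refine hB.trans ?_
      rw [hM]
      exact mul_le_mul_right (ENNReal.rpow_le_rpow hN (by positivity)) _
    have hne : eLpNorm r (ENNReal.ofReal p) ν * ENNReal.ofReal (K' * τ ^ (-((n:ℝ) + s))) ^ (1/q) ≠ ⊤ :=
      ENNReal.mul_ne_top hr.eLpNorm_ne_top
        (ENNReal.rpow_ne_top_of_nonneg (by positivity) ENNReal.ofReal_ne_top)
    refine (ENNReal.toReal_mono hne hle).trans_eq ?_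
    rw [ENNReal.toReal_mul, ← ENNReal.toReal_rpow, ENNReal.toReal_ofReal hKτ]
  refine hfinal.trans_eq ?_
  have hexp : (-((n:ℝ)+s)) * (1/q) = -((n : ℝ) + α + β - n / p) := by
    rw [hsdef, hqdef]
    field_simp
    ring
  rw [Real.mul_rpow hK'.le (by positivity), ← Real.rpow_mul hτ0.le, hexp]
  ring
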